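/- Assume v_1 ≥ v_2 ≥ … ≥ v_n and ∑_{i=1}^n v_i ≥ 1. Let k be the minimal integer with ∑_{i=1}^k v_i ≥ 1 and set U = {1,…,k}. Let (L̂_1,…,L̂_k) be a multinomial random vector with T trials and probability vector (p_1,…,p_k) where p_i = v_i/v(U), and let M̂ = max_{1≤i≤k} L̂_i. Then OPT^DP(U) ≤ E(M̂). -/

import Mathlib

open Finset

/-- MNL choice probability of product `i` when assortment `S` is offered. -/
noncomputable def phi {n : ℕ} (v : Fin n → ℝ) (S : Finset (Fin n)) (i : Fin n) : ℝ :=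
  v i / (1 + ∑ j ∈ S, v j)

/-- MNL no-purchase probability when assortment `S` is offered. -/
noncomputable def phi0 {n : ℕ} (v : Fin n → ℝ) (S : Finset (Fin n)) : ℝ :=
  1 / (1 + ∑ j ∈ S, v j)

/-- The dynamic-programming value functions `M_t(ℓ)` of the adaptive maximum load
problem over the universe `U`: `M_0(ℓ) = max_i ℓ_i` and
`M_t(ℓ) = max_{S ⊆ U} (φ_0(S)·M_{t-1}(ℓ) + ∑_{i∈S} φ_i(S)·M_{t-1}(ℓ + e_i))`. -/
noncomputable def dpVal {n : ℕ} (v : Fin n → ℝ) (U : Finset (Fin n)) :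
    ℕ → (Fin n → ℕ) → ℝ
  | 0, ℓ => ((Finset.univ.sup ℓ : ℕ) : ℝ)
  | t + 1, ℓ =>
      U.powerset.sup' ⟨∅, Finset.empty_mem_powerset U⟩ fun S =>
        phi0 v S * dpVal v U t ℓ +
          ∑ i ∈ S, phi v S i * dpVal v U t (Function.update ℓ i (ℓ i + 1))

/-- `OPT^DP(U) = M_T(0)`: the optimal expected maximum load achievable by an adaptive
policy offering assortments from the universe `U` to `T` sequentially arriving customers
making independent MNL choices. -/
noncomputable def dpOpt {n : ℕ} (v : Fin n → ℝ) (U : Finset (Fin n)) (T : ℕ) : ℝ :=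
  dpVal v U T fun _ => 0

/-- `E(max_{1 ≤ i ≤ k} L_i)` where `(L_1, …, L_k)` is a multinomial random vector with `T`
trials and probability vector `p`: each of `T` independent trials results in outcome
`i : Fin k` with probability `p i`, and `L_i` counts the trials with outcome `i`. -/
noncomputable def multiExpMax (T k : ℕ) (p : Fin k → ℝ) : ℝ :=
  ∑ f : Fin T → Fin k,
    (∏ t, p (f t)) *
      ((Finset.univ.sup fun i => (Finset.univ.filter fun t => f t = i).card : ℕ) : ℝ)

/-!
For a nonempty `S ⊆ U`, minimality of `k` and sortedness give
`v(U) = v_k + v({1,…,k-1}) < v_i + 1 ≤ 1 + v(S)` for every `i ∈ S`, so `φ_i(S) ≤ p_i`: no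
assortment sells a product of `U` more often than the multinomial process does. Since the
expected maximum load only grows when a unit is added, the no-purchase mass `φ_0(S)` may be
moved onto the products of `U`. Hence the expected maximum load of the multinomial process,
as a function of the remaining horizon and the current loads, is a supersolution of the
Bellman recursion for `M_t`, and so dominates it.
-/

open Function

section ExpectedMaxLoad

variable {ι α : Type*} [Fintype ι] [Fintype α] [DecidableEq α]

/-- `𝔼 max_j (ℓ_j + #{t < T | g X_t = j})` for i.i.d. outcomes `X_t ∈ ι` of law `p`, dropped
into the bins `α` by `g`. -/
noncomputable def expectedMaxLoad (p : ι → ℝ) (g : ι → α) (T : ℕ) (ℓ : α → ℕ) : ℝ :=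
  ∑ f : Fin T → ι, (∏ t, p (f t)) *
    ((univ.sup fun j => ℓ j + #{t | g (f t) = j} : ℕ) : ℝ)

theorem expectedMaxLoad_zero (p : ι → ℝ) (g : ι → α) (ℓ : α → ℕ) :
    expectedMaxLoad p g 0 ℓ = (univ.sup ℓ : ℕ) := by
  simp [expectedMaxLoad]

theorem card_filter_fin_succ {T : ℕ} (P : Fin (T + 1) → Prop) [DecidablePred P] :
    #{t | P t} = (if P 0 then 1 else 0) + #{t : Fin T | P t.succ} := by
  simp only [card_filter, Fin.sum_univ_succ]

theorem sup_update_add (ℓ c : α → ℕ) (a : α) :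
    (univ.sup fun j => update ℓ a (ℓ a + 1) j + c j) =
      univ.sup fun j => ℓ j + ((if a = j then 1 else 0) + c j) := by
  congr 1; funext j
  rcases eq_or_ne j a with rfl | h
  · simp only [update_self, ↓reduceIte]; omega
  · simp [update_of_ne h, Ne.symm h]

/-- Conditioning on the outcome of the first trial. -/
theorem expectedMaxLoad_succ (p : ι → ℝ) (g : ι → α) (T : ℕ) (ℓ : α → ℕ) :
    expectedMaxLoad p g (T + 1) ℓ =
      ∑ i, p i * expectedMaxLoad p g T (update ℓ (g i) (ℓ (g i) + 1)) := by
  unfold expectedMaxLoad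
  rw [← (Fin.consEquiv fun _ => ι).sum_comp, Fintype.sum_prod_type]
  refine sum_congr rfl fun i _ => ?_
  rw [mul_sum]
  refine sum_congr rfl fun f _ => ?_
  simp only [Fin.consEquiv_apply, Fin.prod_univ_succ, Fin.cons_zero, Fin.cons_succ,
    card_filter_fin_succ fun t => g ((Fin.cons i f : Fin (T + 1) → ι) t) = _, sup_update_add,
    mul_assoc]

theorem expectedMaxLoad_mono {p : ι → ℝ} (hp : ∀ i, 0 ≤ p i) (g : ι → α) (T : ℕ)
    {ℓ ℓ' : α → ℕ} (h : ℓ ≤ ℓ') : expectedMaxLoad p g T ℓ ≤ expectedMaxLoad p g T ℓ' := by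
  unfold expectedMaxLoad
  gcongr with f _ j
  · exact prod_nonneg fun t _ => hp _
  · exact h j

theorem sup_card_filter_comp_of_injective [DecidableEq ι] {T : ℕ} {g : ι → α}
    (hg : Injective g) (f : Fin T → ι) :
    (univ.sup fun j => #{t | g (f t) = j}) = univ.sup fun i => #{t | f t = i} := by
  have hcount (i : ι) : #{t | g (f t) = g i} = #{t | f t = i} := by
    simp only [hg.eq_iff]
  apply le_antisymm
  · refine Finset.sup_le fun j _ => ?_
    by_cases hj : ∃ i, g i = j
    · obtain ⟨i, rfl⟩ := hj
      exact (hcount i).trans_le (le_sup (f := fun i => #{t | f t = i}) (mem_univ i))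
    · have hempty : ({t | g (f t) = j} : Finset (Fin T)) = ∅ :=
        filter_eq_empty_iff.mpr fun t _ h => hj ⟨f t, h⟩
      simp [hempty]
  · exact Finset.sup_le fun i _ =>
      (hcount i).symm.trans_le (le_sup (f := fun j => #{t | g (f t) = j}) (mem_univ (g i)))

theorem expectedMaxLoad_zero_load {k : ℕ} (p : Fin k → ℝ) {g : Fin k → α} (hg : Injective g)
    (T : ℕ) : expectedMaxLoad p g T 0 = multiExpMax T k p := by
  unfold expectedMaxLoad multiExpMax
  simp only [Pi.zero_apply, zero_add, sup_card_filter_comp_of_injective hg]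

end ExpectedMaxLoad

section Bellman

variable {n : ℕ} {v : Fin n → ℝ}

theorem phi0_add_sum_phi (hv : ∀ i, 0 ≤ v i) (S : Finset (Fin n)) :
    phi0 v S + ∑ i ∈ S, phi v S i = 1 := by
  have hpos : 0 < 1 + ∑ j ∈ S, v j := by
    linarith [sum_nonneg fun j (_ : j ∈ S) => hv j]
  simp only [phi0, phi]
  rw [← sum_div, ← add_div, div_self hpos.ne']

theorem phi_le_div {S : Finset (Fin n)} {i : Fin n} {V : ℝ} (hvi : 0 ≤ v i) (hV : 0 < V)
    (hVS : V ≤ 1 + ∑ j ∈ S, v j) : phi v S i ≤ v i / V :=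
  div_le_div_of_nonneg_left hvi hV hVS

theorem add_sum_mul_le_sum_mul {β : Type*} {S U : Finset β} (hSU : S ⊆ U) {q w B : β → ℝ}
    {q₀ A : ℝ} (hq : q₀ + ∑ i ∈ S, q i = 1) (hw : ∑ j ∈ U, w j = 1)
    (hw₀ : ∀ j ∈ U, 0 ≤ w j) (hqw : ∀ i ∈ S, q i ≤ w i) (hAB : ∀ j ∈ U, A ≤ B j) :
    q₀ * A + ∑ i ∈ S, q i * B i ≤ ∑ j ∈ U, w j * B j := by
  have hq₀ : q₀ = 1 - ∑ i ∈ S, q i := by linarith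
  calc q₀ * A + ∑ i ∈ S, q i * B i = A + ∑ i ∈ S, q i * (B i - A) := by
        simp only [hq₀, mul_sub, sum_sub_distrib, ← sum_mul]; ring
    _ ≤ A + ∑ i ∈ S, w i * (B i - A) := by
        gcongr with i hi
        · exact sub_nonneg.2 (hAB i (hSU hi))
        · exact hqw i hi
    _ ≤ A + ∑ j ∈ U, w j * (B j - A) :=
        (add_le_add_iff_left A).2 (sum_le_sum_of_subset_of_nonneg hSU fun j hj _ =>
          mul_nonneg (hw₀ j hj) (sub_nonneg.2 (hAB j hj)))
    _ = ∑ j ∈ U, w j * B j := by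
        simp only [mul_sub, sum_sub_distrib, ← sum_mul, hw]; ring

theorem dpVal_le_of_supersolution {U : Finset (Fin n)} (hv : ∀ i, 0 ≤ v i)
    {w : Fin n → ℝ} (hw : ∑ j ∈ U, w j = 1) (hw₀ : ∀ j ∈ U, 0 ≤ w j)
    (hphi : ∀ S ⊆ U, ∀ i ∈ S, phi v S i ≤ w i) {E : ℕ → (Fin n → ℕ) → ℝ}
    (hE₀ : ∀ ℓ, (univ.sup ℓ : ℕ) ≤ E 0 ℓ)
    (hE : ∀ t ℓ, ∑ j ∈ U, w j * E t (update ℓ j (ℓ j + 1)) ≤ E (t + 1) ℓ)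
    (hEmono : ∀ t ℓ, ∀ j ∈ U, E t ℓ ≤ E t (update ℓ j (ℓ j + 1))) :
    ∀ t ℓ, dpVal v U t ℓ ≤ E t ℓ := by
  intro t
  induction t with
  | zero => exact hE₀
  | succ t ih =>
    intro ℓ
    rw [dpVal]
    refine sup'_le _ _ fun S hS => ?_
    have hSU := mem_powerset.mp hS
    have hD : 0 ≤ 1 + ∑ j ∈ S, v j := by
      linarith [sum_nonneg fun j (_ : j ∈ S) => hv j]
    calc phi0 v S * dpVal v U t ℓ + ∑ i ∈ S, phi v S i * dpVal v U t (update ℓ i (ℓ i + 1))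
        ≤ phi0 v S * E t ℓ + ∑ i ∈ S, phi v S i * E t (update ℓ i (ℓ i + 1)) := by
          gcongr with i
          · exact div_nonneg zero_le_one hD
          · exact ih ℓ
          · exact div_nonneg (hv i) hD
          · exact ih _
      _ ≤ ∑ j ∈ U, w j * E t (update ℓ j (ℓ j + 1)) :=
          add_sum_mul_le_sum_mul hSU (phi0_add_sum_phi hv S) hw hw₀
            (hphi S hSU) (hEmono t ℓ)
      _ ≤ E (t + 1) ℓ := hE t ℓ

end Bellman

theorem sum_prefix_le_one_add_sum {n k : ℕ} (hkn : k ≤ n) {v : Fin n → ℝ}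
    (hv : ∀ i, 0 ≤ v i) (hanti : Antitone v)
    (hmin : ∑ i ∈ univ.filter (fun i : Fin n => (i : ℕ) < k - 1), v i < 1)
    {S : Finset (Fin n)} (hSU : S ⊆ univ.filter fun i : Fin n => (i : ℕ) < k)
    {i : Fin n} (hi : i ∈ S) :
    ∑ j ∈ univ.filter (fun j : Fin n => (j : ℕ) < k), v j ≤ 1 + ∑ j ∈ S, v j := by
  have hik : (i : ℕ) < k := (mem_filter.mp (hSU hi)).2
  let m : Fin n := ⟨k - 1, by omega⟩
  have hsplit : univ.filter (fun j : Fin n => (j : ℕ) < k) =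
      insert m (univ.filter fun j : Fin n => (j : ℕ) < k - 1) := by
    ext j
    simp only [mem_filter, mem_univ, true_and, mem_insert, m, Fin.ext_iff]
    omega
  have hvm : v m ≤ v i := hanti (Fin.le_iff_val_le_val.mpr (by simp only [m]; omega))
  have hvi : v i ≤ ∑ j ∈ S, v j := single_le_sum (fun j _ => hv j) hi
  rw [hsplit, sum_insert (by simp [m])]
  linarith

theorem dp_on_prefix_dominated_by_multinomial
    (n T k : ℕ) (v : Fin n → ℝ) (hv : ∀ i, 0 < v i)
    (hsorted : ∀ i j : Fin n, i ≤ j → v j ≤ v i)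
    (hk1 : 1 ≤ k) (hkn : k ≤ n)
    (hk : 1 ≤ ∑ i ∈ Finset.univ.filter (fun i : Fin n => (i : ℕ) < k), v i)
    (hmin : ∀ k' : ℕ, k' < k →
      ∑ i ∈ Finset.univ.filter (fun i : Fin n => (i : ℕ) < k'), v i < 1) :
    dpOpt v (Finset.univ.filter fun i : Fin n => (i : ℕ) < k) T ≤
      multiExpMax T k (fun i : Fin k =>
        v ⟨(i : ℕ), lt_of_lt_of_le i.isLt hkn⟩ /
          ∑ j ∈ Finset.univ.filter (fun j : Fin n => (j : ℕ) < k), v j) := by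
  set U := univ.filter fun i : Fin n => (i : ℕ) < k
  set V := ∑ j ∈ U, v j
  have hV : 0 < V := one_pos.trans_le hk
  have hv₀ (i : Fin n) : 0 ≤ v i := (hv i).le
  have hp₀ (i : Fin n) : 0 ≤ v i / V := div_nonneg (hv₀ i) hV.le
  have hU : U = univ.map (Fin.castLEEmb hkn) := by
    ext j
    simp only [U, mem_filter, mem_univ, true_and, mem_map, Fin.castLEEmb_apply, Fin.ext_iff,
      Fin.val_castLE]
    exact ⟨fun h => ⟨⟨j, h⟩, rfl⟩, fun ⟨a, h⟩ => h ▸ a.isLt⟩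
  rw [← expectedMaxLoad_zero_load _ (Fin.castLE_injective hkn)]
  refine dpVal_le_of_supersolution (U := U) hv₀ (by rw [← sum_div, div_self hV.ne'])
    (fun j _ => hp₀ j)
    (fun S hSU i hi => phi_le_div (hv₀ i) hV
      (sum_prefix_le_one_add_sum hkn hv₀ hsorted (hmin (k - 1) (by omega)) hSU hi))
    (fun ℓ => (expectedMaxLoad_zero _ _ ℓ).ge) (fun t ℓ => ?_) (fun t ℓ j _ => ?_) T 0
  · rw [hU, sum_map, expectedMaxLoad_succ]
    exact le_rfl
  · exact expectedMaxLoad_mono (fun _ => hp₀ _) _ t (le_update_self_iff.mpr le_self_add)
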